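/- arXiv:0902.4869 — 3 statements merged into one kernel-verified Lean document; each statement's English description precedes it below -/
import Mathlib

section
/- Let A ∈ M_n(ℂ) be a Hermitian matrix with eigenvalues a_1 ≥ a_2 ≥ … ≥ a_n (listed with multiplicity), and let 1 ≤ k < n. Then Λ_k(A) equals the real interval [a_{n−k+1}, a_k] regarded as a subset of ℂ, i.e., Λ_k(A) = {x ∈ ℝ : a_{n−k+1} ≤ x ≤ a_k} (which is empty when a_{n−k+1} > a_k). -/
/-!
By the spectral theorem `A` is unitarily conjugate to `diag(a)` up to a simultaneous
permutation of coordinates, and `Λ_k` is invariant under both, so `A` may be replaced by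
`D = diag(a)` with `a` decreasing (indices from `0`).

If `PDP = λP` and `v ≠ 0` lies in the range of `P`, then `λ‖v‖² = ⟨v, Dv⟩ = ∑ |vᵢ|² aᵢ`, so `λ`
is a convex combination of the `aᵢ` with `vᵢ ≠ 0`. A `k`-dimensional range contains such a `v`
vanishing on any `k - 1` prescribed coordinates: on `{i < k - 1}` this gives `λ ≤ a_{k-1}`, on
`{i > n - k}` it gives `a_{n-k} ≤ λ`, and `λ` is real.

Conversely, for `a_{n-k} ≤ λ ≤ a_{k-1}`, a unit vector in `span {e_j, e_{n-1-j}}` has Rayleigh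
quotient `λ` for each `j < k`; these `k` vectors have disjoint supports, and the projection onto
their span compresses `D` to `λ`.
-/

open scoped Classical
open Matrix

noncomputable section

/-- The rank-`k` numerical range of a matrix `A`. -/
def rankNumRange (n k : ℕ) (A : Matrix (Fin n) (Fin n) ℂ) : Set ℂ :=
  {lam : ℂ | ∃ P : Matrix (Fin n) (Fin n) ℂ,
    P.IsHermitian ∧ P * P = P ∧ P.rank = k ∧ P * A * P = lam • P}

/-- The left closed half plane determined by the directed line through `a` and `b`. -/
def halfPlane (a b : ℂ) : Set ℂ :=
  {z : ℂ | 0 ≤ (((starRingEnd ℂ) b - (starRingEnd ℂ) a) * (z - a)).im}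

/-- The left open half plane determined by the directed line through `a` and `b`. -/
def openHalfPlane (a b : ℂ) : Set ℂ :=
  {z : ℂ | 0 < (((starRingEnd ℂ) b - (starRingEnd ℂ) a) * (z - a)).im}

/-- The number of eigenvalues of `A`, counted with (algebraic) multiplicity,
lying in the set `s`. -/
def eigCountIn {n : ℕ} (A : Matrix (Fin n) (Fin n) ℂ) (s : Set ℂ) : ℕ :=
  Multiset.card (A.charpoly.roots.filter (fun z => z ∈ s))

/-- The closed half plane `𝓗(d, ξ)`. -/
def cH (d ξ : ℝ) : Set ℂ :=
  {μ : ℂ | (Complex.exp (-(ξ : ℂ) * Complex.I) * μ).re ≤ d}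

/-- The line `𝓛(d, ξ)`. -/
def cL (d ξ : ℝ) : Set ℂ :=
  {μ : ℂ | (Complex.exp (-(ξ : ℂ) * Complex.I) * μ).re = d}

/-- The open semicircular arc of the unit circle starting at `β`
(traversed counterclockwise), without endpoints. -/
def openSemicircle (β : ℂ) : Set ℂ :=
  {z : ℂ | ∃ t : ℝ, 0 < t ∧ t < Real.pi ∧ z = Complex.exp (t * Complex.I) * β}

/-- A set of points on the unit circle is `k`-regular if every open semicircular
arc contains at least `k` of its elements. -/
def IsKRegular (k : ℕ) (S : Set ℂ) : Prop :=
  ∀ β : ℂ, ‖β‖ = 1 → k ≤ (S ∩ openSemicircle β).ncard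

section Invariance

variable {n k : ℕ}

lemma rankNumRange_subset_map (φ : Matrix (Fin n) (Fin n) ℂ ≃⋆ₐ[ℂ] Matrix (Fin n) (Fin n) ℂ)
    (hφ : ∀ P, (φ P).rank = P.rank) (A : Matrix (Fin n) (Fin n) ℂ) :
    rankNumRange n k A ⊆ rankNumRange n k (φ A) := by
  rintro l ⟨P, hP, hPP, hrank, hPAP⟩
  refine ⟨φ P, ?_, by rw [← map_mul, hPP], by rw [hφ, hrank], ?_⟩
  · exact hP.isSelfAdjoint.map φ
  · rw [← map_mul, ← map_mul, hPAP, map_smul]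

lemma rankNumRange_map (φ : Matrix (Fin n) (Fin n) ℂ ≃⋆ₐ[ℂ] Matrix (Fin n) (Fin n) ℂ)
    (hφ : ∀ P, (φ P).rank = P.rank) (A : Matrix (Fin n) (Fin n) ℂ) :
    rankNumRange n k (φ A) = rankNumRange n k A := by
  refine Set.Subset.antisymm ?_ (rankNumRange_subset_map φ hφ A)
  simpa using rankNumRange_subset_map φ.symm (fun P => by rw [← hφ, φ.apply_symm_apply]) (φ A)

end Invariance

lemma Matrix.rank_conjStarAlgAut {m R : Type*} [Fintype m] [DecidableEq m] [Field R] [StarRing R]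
    (U : unitaryGroup m R) (P : Matrix m m R) :
    (Unitary.conjStarAlgAut R _ U P).rank = P.rank := by
  rw [Unitary.conjStarAlgAut_apply, ← Unitary.coe_star,
    rank_mul_eq_left_of_isUnit_det _ _ (UnitaryGroup.det_isUnit (star U)),
    rank_mul_eq_right_of_isUnit_det _ _ (UnitaryGroup.det_isUnit U)]

def Matrix.reindexStarAlgEquiv {l m R : Type*} [Fintype l] [Fintype m] [DecidableEq l]
    [DecidableEq m] [CommSemiring R] [StarRing R] (e : l ≃ m) : Matrix l l R ≃⋆ₐ[R] Matrix m m R :=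
  { reindexAlgEquiv R R e with
    map_smul' := map_smul (reindexAlgEquiv R R e)
    map_star' := fun _ => (conjTranspose_submatrix ..).symm }

lemma Matrix.rank_reindexStarAlgEquiv {l m R : Type*} [Fintype l] [Fintype m] [DecidableEq l]
    [DecidableEq m] [CommRing R] [StarRing R] (e : l ≃ m) (P : Matrix l l R) :
    (reindexStarAlgEquiv e P).rank = P.rank :=
  rank_submatrix P e.symm e.symm

lemma Matrix.IsHermitian.exists_equiv_eigenvalues_eq {n : ℕ} {A : Matrix (Fin n) (Fin n) ℂ}
    (hA : A.IsHermitian) {a : Fin n → ℝ} (ha : Antitone a)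
    (hroots : A.charpoly.roots = Multiset.map (fun i => (a i : ℂ)) Finset.univ.val) :
    ∃ σ : Fin n ≃ Fin n, hA.eigenvalues = a ∘ σ := by
  have hlist : List.ofFn hA.eigenvalues₀ = List.ofFn a := by
    refine List.Perm.eq_of_sortedGE hA.eigenvalues₀_antitone.sortedGE_ofFn ha.sortedGE_ofFn ?_
    rw [← Multiset.coe_eq_coe, ← Fin.univ_val_map, ← Fin.univ_val_map]
    apply Multiset.map_injective Complex.ofReal_injective
    rw [Multiset.map_map, Multiset.map_map]
    exact hA.roots_charpoly_eq_eigenvalues₀.symm.trans hroots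
  obtain ⟨hcard, heq⟩ := Fin.sigma_eq_iff_eq_comp_cast.mp (List.ofFn_inj'.mp hlist)
  exact ⟨(Fintype.equivOfCardEq (Fintype.card_fin _)).symm.trans (finCongr hcard),
    funext fun i => congrFun heq _⟩

lemma Submodule.exists_ne_zero_forall_mem_eq_zero {K ι : Type*} [Field K] [Fintype ι]
    (V : Submodule K (ι → K)) (s : Finset ι) (hs : s.card < Module.finrank K V) :
    ∃ v ∈ V, v ≠ 0 ∧ ∀ i ∈ s, v i = 0 := by
  let restrict : V →ₗ[K] (s → K) := LinearMap.funLeft K K ((↑) : s → ι) ∘ₗ V.subtype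
  obtain ⟨v, hv, hv0⟩ := Submodule.exists_mem_ne_zero_of_ne_bot
    (restrict.ker_ne_bot_of_finrank_lt (by simpa using hs))
  exact ⟨v, v.2, by simpa using hv0, fun i hi => congrFun hv ⟨i, hi⟩⟩

lemma Matrix.IsHermitian.mul_star_dotProduct_eq {ι R : Type*} [Fintype ι] [CommRing R]
    [StarRing R] {P A : Matrix ι ι R} {l : R} (hP : P.IsHermitian) (hPAP : P * A * P = l • P)
    {v : ι → R} (hv : P *ᵥ v = v) :
    l * (star v ⬝ᵥ v) = star v ⬝ᵥ (A *ᵥ v) := by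
  have hvP : star v ᵥ* P = star v := by rw [← hP.eq, ← star_mulVec, hv]
  calc l * (star v ⬝ᵥ v) = star v ⬝ᵥ ((l • P) *ᵥ v) := by
        rw [smul_mulVec, hv, dotProduct_smul, smul_eq_mul]
    _ = star v ⬝ᵥ (A *ᵥ v) := by
        rw [← hPAP, ← mulVec_mulVec, ← mulVec_mulVec, hv, dotProduct_mulVec, hvP]

open scoped ComplexOrder in
lemma mem_rankNumRange_of_orthonormal {n k : ℕ} {A : Matrix (Fin n) (Fin n) ℂ} {l : ℂ}
    (u : Fin k → Fin n → ℂ) (hu : ∀ i j, star (u i) ⬝ᵥ u j = if i = j then 1 else 0)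
    (hAu : ∀ i j, star (u i) ⬝ᵥ (A *ᵥ u j) = if i = j then l else 0) :
    l ∈ rankNumRange n k A := by
  set M : Matrix (Fin n) (Fin k) ℂ := (of u)ᵀ
  have hentry : ∀ (B : Matrix (Fin n) (Fin n) ℂ) i j,
      (Mᴴ * B * M) i j = star (u i) ⬝ᵥ (B *ᵥ u j) := by
    intro B i j
    simp only [M, mul_apply, dotProduct, mulVec, Finset.mul_sum, Finset.sum_mul, mul_assoc]
    exact Finset.sum_comm
  have hMM : Mᴴ * M = 1 := by
    ext i j
    rw [← Matrix.mul_one Mᴴ, hentry, one_mulVec, hu, one_apply]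
  have hMAM : Mᴴ * A * M = l • 1 := by
    ext i j
    rw [hentry, hAu]
    simp [one_apply]
  refine ⟨M * Mᴴ, isHermitian_mul_conjTranspose_self M, ?_, ?_, ?_⟩
  · rw [Matrix.mul_assoc, ← Matrix.mul_assoc Mᴴ, hMM, Matrix.one_mul]
  · rw [rank_self_mul_conjTranspose, ← rank_conjTranspose_mul_self, hMM, rank_one,
      Fintype.card_fin]
  · calc M * Mᴴ * A * (M * Mᴴ) = M * (Mᴴ * A * M) * Mᴴ := by simp only [Matrix.mul_assoc]
      _ = l • (M * Mᴴ) := by rw [hMAM, Matrix.mul_smul, Matrix.mul_one, Matrix.smul_mul]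

lemma exists_sq_add_sq_eq_one_of_mem_Icc {x y l : ℝ} (hl : l ∈ Set.Icc x y) :
    ∃ c s : ℝ, c ^ 2 + s ^ 2 = 1 ∧ c ^ 2 * y + s ^ 2 * x = l := by
  obtain ⟨α, β, hα, hβ, hαβ, rfl⟩ : l ∈ segment ℝ x y := segment_eq_Icc (hl.1.trans hl.2) ▸ hl
  refine ⟨√β, √α, by rw [Real.sq_sqrt hβ, Real.sq_sqrt hα, add_comm, hαβ], ?_⟩
  rw [Real.sq_sqrt hα, Real.sq_sqrt hβ, smul_eq_mul, smul_eq_mul]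
  ring

lemma exists_unit_star_dotProduct_diagonal_mulVec_eq {ι : Type*} [Fintype ι] [DecidableEq ι]
    (a : ι → ℝ) {p q : ι} {l : ℝ} (hq : a q ≤ l) (hp : l ≤ a p) :
    ∃ u : ι → ℂ, (∀ i, u i ≠ 0 → i = p ∨ i = q) ∧ star u ⬝ᵥ u = 1 ∧
      star u ⬝ᵥ (diagonal (fun i => (a i : ℂ)) *ᵥ u) = l := by
  by_cases hpq : p = q
  · subst hpq
    refine ⟨Pi.single p 1, fun i hi => .inl ?_, by simp, by simp [le_antisymm hp hq]⟩
    by_contra h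
    simp [h] at hi
  · obtain ⟨c, s, hcs, hl⟩ := exists_sq_add_sq_eq_one_of_mem_Icc ⟨hq, hp⟩
    refine ⟨Pi.single p (c : ℂ) + Pi.single q (s : ℂ), fun i hi => ?_, ?_, ?_⟩
    · by_contra! h
      simp [h.1, h.2] at hi
    · simpa [star_add, dotProduct_add, hpq, Ne.symm hpq] using
        congrArg Complex.ofReal (by linear_combination hcs : c * c + s * s = 1)
    · simpa [star_add, dotProduct_add, mulVec_add, hpq, Ne.symm hpq] using
        congrArg Complex.ofReal (by linear_combination hl : c * (c * a p) + s * (s * a q) = l)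

section Diagonal

variable {n k : ℕ} {a : Fin n → ℝ}

open Finset in
lemma mem_convexHull_of_mem_rankNumRange_diagonal {l : ℂ}
    (hl : l ∈ rankNumRange n k (diagonal fun i => (a i : ℂ))) (s : Finset (Fin n))
    (hs : #s < k) :
    l ∈ convexHull ℝ ((fun i => (a i : ℂ)) '' ↑sᶜ) := by
  obtain ⟨P, hP, hPP, hrank, hPAP⟩ := hl
  obtain ⟨v, hvP, hv0, hvs⟩ :=
    (LinearMap.range P.mulVecLin).exists_ne_zero_forall_mem_eq_zero s (by rwa [← rank, hrank])
  have hPv : P *ᵥ v = v := by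
    obtain ⟨u, rfl⟩ := hvP
    rw [mulVecLin_apply, mulVec_mulVec, hPP]
  set w : Fin n → ℝ := fun i => Complex.normSq (v i)
  have hw : l * ((∑ i, w i : ℝ) : ℂ) = ∑ i, w i • (a i : ℂ) := by
    simpa [dotProduct, w, mulVec_diagonal, Complex.normSq_eq_conj_mul_self, mul_left_comm,
      mul_comm, mul_assoc] using hP.mul_star_dotProduct_eq hPAP hPv
  have hwpos : 0 < ∑ i, w i := by
    obtain ⟨i, hi⟩ := Function.ne_iff.mp hv0
    exact sum_pos' (fun i _ => Complex.normSq_nonneg _)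
      ⟨i, mem_univ i, Complex.normSq_pos.mpr hi⟩
  have hws : ∀ i ∈ univ, i ∉ sᶜ → w i = 0 := fun i _ hi => by
    simp [w, hvs i (by simpa using hi)]
  have hl : l = sᶜ.centerMass w (fun i => (a i : ℂ)) := by
    rw [centerMass_subset _ (subset_univ _) hws, centerMass, ← hw, Complex.real_smul,
      Complex.ofReal_inv, mul_comm l, inv_mul_cancel_left₀ (by exact_mod_cast hwpos.ne')]
  rw [hl]
  refine sᶜ.centerMass_mem_convexHull (fun i _ => Complex.normSq_nonneg _) ?_
    (fun i hi => ⟨i, by simpa using hi, rfl⟩)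
  rwa [sum_subset (subset_univ _) hws]

lemma rankNumRange_diagonal_subset (ha : Antitone a) (hk : 1 ≤ k) (hkn : k < n) :
    rankNumRange n k (diagonal fun i => (a i : ℂ)) ⊆
      {z | z.im = 0 ∧ a ⟨n - k, Nat.sub_lt (Nat.zero_lt_of_lt hkn) hk⟩ ≤ z.re ∧
        z.re ≤ a ⟨k - 1, (k.sub_le 1).trans_lt hkn⟩} := by
  intro l hl
  have hupper : l ∈ {z : ℂ | z.im = 0 ∧ z.re ≤ a ⟨k - 1, by omega⟩} := by
    refine convexHull_min ?_
      ((convex_hyperplane Complex.imLm.isLinear 0).inter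
        (convex_halfSpace_re_le (a ⟨k - 1, by omega⟩)))
      (mem_convexHull_of_mem_rankNumRange_diagonal hl (.Iio ⟨k - 1, by omega⟩) (by simp; omega))
    rintro _ ⟨i, hi, rfl⟩
    simp only [Finset.coe_compl, Finset.coe_Iio, Set.mem_compl_iff, Set.mem_Iio, not_lt] at hi
    exact ⟨Complex.ofReal_im (a i), ha hi⟩
  have hlower : l ∈ {z : ℂ | a ⟨n - k, by omega⟩ ≤ z.re} := by
    refine convexHull_min ?_ (convex_halfSpace_re_ge (a ⟨n - k, by omega⟩))
      (mem_convexHull_of_mem_rankNumRange_diagonal hl (.Ioi ⟨n - k, by omega⟩) (by simp; omega))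
    rintro _ ⟨i, hi, rfl⟩
    simp only [Finset.coe_compl, Finset.coe_Ioi, Set.mem_compl_iff, Set.mem_Ioi, not_lt] at hi
    exact ha hi
  exact ⟨hupper.1, hlower, hupper.2⟩

lemma subset_rankNumRange_diagonal (ha : Antitone a) (hk : 1 ≤ k) (hkn : k < n) :
    {z | z.im = 0 ∧ a ⟨n - k, Nat.sub_lt (Nat.zero_lt_of_lt hkn) hk⟩ ≤ z.re ∧
        z.re ≤ a ⟨k - 1, (k.sub_le 1).trans_lt hkn⟩} ⊆
      rankNumRange n k (diagonal fun i => (a i : ℂ)) := by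
  rintro z ⟨hz, hlower, hupper⟩
  rw [show z = (z.re : ℂ) from Complex.ext rfl (by simpa using hz)]
  generalize z.re = l at hlower hupper
  -- column `j` mixes `e_j` with `e_(n-1-j)`; if `n - 1 - j < k`, that index belongs to another
  -- column, but then `a j = l` and `e_j` alone will do
  let p : Fin k → Fin n := fun j => ⟨j, by omega⟩
  let q : Fin k → Fin n := fun j => if (j : ℕ) < n - k then ⟨n - 1 - j, by omega⟩ else p j
  have hq : ∀ j, a (q j) ≤ l := by
    refine fun j => (ha ?_).trans hlower
    simp only [q, Fin.le_def]
    split <;> simp only [p] <;> omega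
  have hp : ∀ j, l ≤ a (p j) := fun j =>
    hupper.trans (ha (Fin.le_def.mpr (Nat.le_sub_one_of_lt j.2)))
  choose u hsupp hnorm hform using
    fun j => exists_unit_star_dotProduct_diagonal_mulVec_eq a (hq j) (hp j)
  have hdisj : ∀ i j, i ≠ j → ∀ x, u i x = 0 ∨ u j x = 0 := by
    intro i j hij x
    by_contra! h
    have hval : ∀ j, u j x ≠ 0 → (x : ℕ) = j ∨ ((j : ℕ) < n - k ∧ (x : ℕ) = n - 1 - j) := by
      intro j hj
      rcases hsupp j x hj with rfl | rfl
      · exact .inl rfl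
      · simp only [q]; split_ifs <;> simp_all [p]
    have := Fin.val_ne_of_ne hij
    rcases hval i h.1 with _ | _ <;> rcases hval j h.2 with _ | _ <;> omega
  apply mem_rankNumRange_of_orthonormal u
  · intro i j
    split_ifs with hij
    · exact hij ▸ hnorm i
    · exact Finset.sum_eq_zero fun x _ => by rcases hdisj i j hij x with h | h <;> simp [h]
  · intro i j
    split_ifs with hij
    · exact hij ▸ hform i
    · exact Finset.sum_eq_zero fun x _ => by
        rcases hdisj i j hij x with h | h <;> simp [h, mulVec_diagonal]

lemma rankNumRange_diagonal (ha : Antitone a) (hk : 1 ≤ k) (hkn : k < n) :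
    rankNumRange n k (diagonal fun i => (a i : ℂ)) =
      {z | z.im = 0 ∧ a ⟨n - k, Nat.sub_lt (Nat.zero_lt_of_lt hkn) hk⟩ ≤ z.re ∧
        z.re ≤ a ⟨k - 1, (k.sub_le 1).trans_lt hkn⟩} :=
  (rankNumRange_diagonal_subset ha hk hkn).antisymm (subset_rankNumRange_diagonal ha hk hkn)

end Diagonal

/-- For a Hermitian matrix with eigenvalues `a 0 ≥ a 1 ≥ … ≥ a (n-1)`
listed with multiplicity, the rank-k numerical range is the real interval
`[a_{n-k+1}, a_k]` (1-indexed) viewed as a subset of ℂ. -/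
theorem stmt3 {n k : ℕ} (hk : 1 ≤ k) (hkn : k < n)
    (A : Matrix (Fin n) (Fin n) ℂ) (hA : A.IsHermitian)
    (a : Fin n → ℝ) (hmono : ∀ i j : Fin n, i ≤ j → a j ≤ a i)
    (hroots : A.charpoly.roots = Multiset.map (fun j => ((a j : ℝ) : ℂ)) Finset.univ.val) :
    rankNumRange n k A =
      {z : ℂ | z.im = 0 ∧ a ⟨n - k, by omega⟩ ≤ z.re ∧ z.re ≤ a ⟨k - 1, by omega⟩} := by
  obtain ⟨σ, hσ⟩ := hA.exists_equiv_eigenvalues_eq hmono hroots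
  have hA' : A = Unitary.conjStarAlgAut ℂ _ hA.eigenvectorUnitary
      (reindexStarAlgEquiv σ.symm (diagonal fun i => (a i : ℂ))) := by
    conv_lhs => rw [hA.spectral_theorem]
    rw [hσ]
    congr 1
    exact (submatrix_diagonal_equiv (fun i => (a i : ℂ)) σ).symm
  rw [hA', rankNumRange_map _ (rank_conjStarAlgAut _),
    rankNumRange_map _ (rank_reindexStarAlgEquiv _)]
  exact rankNumRange_diagonal hmono hk hkn
end
end

section
/- Let k ≥ 1 and let a_1, a_2 ∈ ℂ. If a_1 ≠ a_2 and P = conv{a_1, a_2} is the closed line segment joining them, then the smallest n for which there exists a normal matrix A ∈ M_n(ℂ) with Λ_k(A) = P is n = 2k: there is a normal A ∈ M_{2k}(ℂ) with Λ_k(A) = P, and no normal A ∈ M_n(ℂ) with n < 2k has Λ_k(A) = P. If a_1 = a_2 and P = {a_1}, then the smallest such n is n = k. -/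
open scoped Classical
open Matrix

noncomputable section

/-!
If `P A P = λ P` for a rank-`k` orthogonal projection `P`, then `P (A - λ) P = 0`, and when
`A - λ` is invertible this forces `2 rank P ≤ n`. So for `n < 2k` every point of `Λ_k(A)` is an
eigenvalue, `Λ_k(A)` is finite and cannot be a nondegenerate segment (and for `n < k` it is empty).
For `A = diag(a₁, …, a₁, a₂, …, a₂)` of size `2k`, every `λ ∈ Λ_k(A)` is a Rayleigh quotient
`x* A x / x* x` with `x` in the range of `P`, hence a convex combination of `a₁` and `a₂`;
conversely `s a₁ + t a₂` is realised by the compression `Cᴴ A C` along the isometry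
`C = (√s, √t)ᵀ ⊗ I_k`, whose range projection is `C Cᴴ`.
-/

open Kronecker

section RankNumRange

variable {n k : ℕ} {A : Matrix (Fin n) (Fin n) ℂ} {lam : ℂ}

lemma rankNumRange_eq_empty_of_lt (h : n < k) : rankNumRange n k A = ∅ := by
  refine Set.eq_empty_of_forall_notMem fun lam ⟨P, _, _, hrank, _⟩ => ?_
  have := P.rank_le_width
  omega

lemma mem_spectrum_of_mem_rankNumRange (hn : n < 2 * k) (h : lam ∈ rankNumRange n k A) :
    lam ∈ spectrum ℂ A := by
  obtain ⟨P, -, hidem, hrank, hPAP⟩ := h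
  rw [spectrum.mem_iff, isUnit_iff_isUnit_det]
  intro hunit
  have hzero : P * (algebraMap ℂ _ lam - A) * P = 0 := by
    rw [Matrix.mul_sub, Matrix.sub_mul, hPAP, Algebra.algebraMap_eq_smul_one, Matrix.mul_smul,
      Matrix.mul_one, Matrix.smul_mul, hidem, sub_self]
  have := rank_add_rank_le_card_of_mul_eq_zero hzero
  rw [rank_mul_eq_left_of_isUnit_det _ _ hunit, Fintype.card_fin] at this
  omega

lemma rankNumRange_finite (hn : n < 2 * k) : (rankNumRange n k A).Finite :=
  A.finite_spectrum.subset fun _ => mem_spectrum_of_mem_rankNumRange hn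

lemma exists_ne_zero_dotProduct_mulVec_eq_of_mem_rankNumRange (hk : 1 ≤ k)
    (h : lam ∈ rankNumRange n k A) :
    ∃ x : Fin n → ℂ, x ≠ 0 ∧ star x ⬝ᵥ A *ᵥ x = lam * (star x ⬝ᵥ x) := by
  obtain ⟨P, hherm, hidem, hrank, hPAP⟩ := h
  obtain ⟨v, hv⟩ : ∃ v, P *ᵥ v ≠ 0 := by
    by_contra! hzero
    have : P = 0 := by
      ext i j
      simpa using congrFun (hzero (Pi.single j 1)) i
    rw [this, rank_zero] at hrank
    omega
  have compress (M : Matrix (Fin n) (Fin n) ℂ) :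
      star (P *ᵥ v) ⬝ᵥ M *ᵥ (P *ᵥ v) = star v ⬝ᵥ (P * M * P) *ᵥ v := by
    rw [star_mulVec, hherm.eq, ← dotProduct_mulVec, mulVec_mulVec, mulVec_mulVec,
      Matrix.mul_assoc]
  have hnorm : star (P *ᵥ v) ⬝ᵥ P *ᵥ v = star v ⬝ᵥ P *ᵥ v := by
    simpa [hidem] using compress 1
  refine ⟨P *ᵥ v, hv, ?_⟩
  rw [compress, hPAP, hnorm, smul_mulVec, dotProduct_smul, smul_eq_mul]

open scoped ComplexOrder in
lemma mem_rankNumRange_of_conjTranspose_mul_eq {κ : Type*} [Fintype κ] [DecidableEq κ]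
    (C : Matrix (Fin n) κ ℂ) (hC : Cᴴ * C = 1) (hCAC : Cᴴ * A * C = lam • 1) :
    lam ∈ rankNumRange n (Fintype.card κ) A := by
  refine ⟨C * Cᴴ, isHermitian_mul_conjTranspose_self C, ?_, ?_, ?_⟩
  · rw [Matrix.mul_assoc, ← Matrix.mul_assoc Cᴴ, hC, Matrix.one_mul]
  · rw [rank_self_mul_conjTranspose, ← rank_conjTranspose_mul_self, hC, rank_one]
  · calc C * Cᴴ * A * (C * Cᴴ) = C * (Cᴴ * A * C) * Cᴴ := by simp only [Matrix.mul_assoc]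
      _ = lam • (C * Cᴴ) := by rw [hCAC, Matrix.mul_smul, Matrix.mul_one, Matrix.smul_mul]

end RankNumRange

lemma segment_infinite {E : Type*} [AddCommGroup E] [Module ℝ E] {a b : E} (h : a ≠ b) :
    (segment ℝ a b).Infinite := by
  rw [segment_eq_image_lineMap]
  exact (Set.Icc_infinite zero_lt_one).image (AffineMap.lineMap_injective ℝ h).injOn

lemma diagonal_mul_conjTranspose_self_comm {ι α : Type*} [Fintype ι] [DecidableEq ι]
    [CommSemiring α] [StarRing α] (d : ι → α) :
    diagonal d * (diagonal d)ᴴ = (diagonal d)ᴴ * diagonal d := by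
  rw [diagonal_conjTranspose]
  exact commute_diagonal _ _

lemma mem_convexHull_range_of_dotProduct_diagonal_mulVec_eq {ι : Type*} [Fintype ι]
    [DecidableEq ι] {d x : ι → ℂ} {lam : ℂ} (hx : x ≠ 0)
    (h : star x ⬝ᵥ diagonal d *ᵥ x = lam * (star x ⬝ᵥ x)) :
    lam ∈ convexHull ℝ (Set.range d) := by
  set w : ι → ℝ := fun i => Complex.normSq (x i)
  have hw : 0 < ∑ i, w i := by
    obtain ⟨i, hi⟩ := Function.ne_iff.mp hx
    exact Finset.sum_pos' (fun j _ => Complex.normSq_nonneg _)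
      ⟨i, Finset.mem_univ _, Complex.normSq_pos.mpr hi⟩
  have hsum : ∑ i, w i • d i = lam * ∑ i, (w i : ℂ) := by
    have hx_sq (i : ι) : star (x i) * x i = (w i : ℂ) := Complex.normSq_eq_conj_mul_self.symm
    simp only [dotProduct, mulVec_diagonal, Pi.star_apply] at h
    simp only [Complex.real_smul, ← hx_sq]
    convert h using 2 with i
    ring
  have hlam : Finset.univ.centerMass w d = lam := by
    rw [Finset.centerMass, hsum, ← Complex.ofReal_sum, Complex.real_smul, Complex.ofReal_inv,
      mul_comm lam, inv_mul_cancel_left₀ (Complex.ofReal_ne_zero.mpr hw.ne')]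
  rw [← hlam]
  exact Finset.univ.centerMass_mem_convexHull (fun i _ => Complex.normSq_nonneg _) hw
    fun i _ => Set.mem_range_self i

lemma rankNumRange_diagonal_subset_convexHull {n k : ℕ} (hk : 1 ≤ k) (d : Fin n → ℂ) :
    rankNumRange n k (diagonal d) ⊆ convexHull ℝ (Set.range d) := fun _ h =>
  let ⟨_, hx, hxd⟩ := exists_ne_zero_dotProduct_mulVec_eq_of_mem_rankNumRange hk h
  mem_convexHull_range_of_dotProduct_diagonal_mulVec_eq hx hxd

lemma rankNumRange_smul_one {k : ℕ} (hk : 1 ≤ k) (a : ℂ) :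
    rankNumRange k k (a • (1 : Matrix (Fin k) (Fin k) ℂ)) = {a} := by
  refine subset_antisymm ?_ ?_
  · have : Nonempty (Fin k) := ⟨⟨0, hk⟩⟩
    have h := rankNumRange_diagonal_subset_convexHull hk fun _ : Fin k => a
    rwa [Set.range_const, convexHull_singleton, ← smul_one_eq_diagonal] at h
  · refine Set.singleton_subset_iff.2 ?_
    simpa using mem_rankNumRange_of_conjTranspose_mul_eq (A := a • 1)
      (1 : Matrix (Fin k) (Fin k) ℂ) (by simp) (by simp)

lemma exists_conjTranspose_mul_eq_of_mem_segment {a b lam : ℂ} (h : lam ∈ segment ℝ a b) :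
    ∃ C : Matrix (Fin 2) Unit ℂ, Cᴴ * C = 1 ∧ Cᴴ * diagonal ![a, b] * C = lam • 1 := by
  obtain ⟨s, t, hs, ht, hst, rfl⟩ := h
  have hs' : (√s : ℂ) * √s = s := by rw [← Complex.ofReal_mul, Real.mul_self_sqrt hs]
  have ht' : (√t : ℂ) * √t = t := by rw [← Complex.ofReal_mul, Real.mul_self_sqrt ht]
  refine ⟨of fun i _ => ![(√s : ℂ), (√t : ℂ)] i, ?_, ?_⟩ <;> ext
  · simp [mul_apply, Fin.sum_univ_two, hs', ht', ← Complex.ofReal_add, hst]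
  · simp only [mul_apply, conjTranspose_apply, of_apply, RCLike.star_def, Fin.sum_univ_two,
      cons_val_zero, cons_val_one, Complex.conj_ofReal, diagonal_apply_eq, diagonal_apply_ne,
      ne_eq, one_ne_zero, zero_ne_one, not_false_eq_true, mul_zero, add_zero, zero_add,
      Matrix.smul_apply, one_apply_eq, smul_eq_mul, mul_one, Complex.real_smul]
    linear_combination a * hs' + b * ht'

section SegmentMatrix

variable (k : ℕ) (a b : ℂ)

/-- `diag(a, …, a, b, …, b)`, each entry repeated `k` times. -/
def segmentMatrix : Matrix (Fin (2 * k)) (Fin (2 * k)) ℂ :=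
  diagonal fun i => ![a, b] (finProdFinEquiv.symm i).1

lemma segmentMatrix_eq_submatrix_kronecker :
    segmentMatrix k a b = (diagonal ![a, b] ⊗ₖ (1 : Matrix (Fin k) (Fin k) ℂ)).submatrix
      finProdFinEquiv.symm finProdFinEquiv.symm := by
  rw [← diagonal_one, diagonal_kronecker_diagonal, submatrix_diagonal_equiv]
  simp [segmentMatrix, Function.comp_def]

lemma rankNumRange_segmentMatrix_subset (hk : 1 ≤ k) :
    rankNumRange (2 * k) k (segmentMatrix k a b) ⊆ segment ℝ a b := by
  refine (rankNumRange_diagonal_subset_convexHull hk _).trans ?_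
  rw [← convexHull_pair]
  have entries : ∀ j : Fin 2, ![a, b] j ∈ ({a, b} : Set ℂ) := by simp [Fin.forall_fin_two]
  exact convexHull_mono (Set.range_subset_iff.2 fun i => entries _)

lemma segment_subset_rankNumRange_segmentMatrix :
    segment ℝ a b ⊆ rankNumRange (2 * k) k (segmentMatrix k a b) := by
  intro lam h
  obtain ⟨C, hC, hCDC⟩ := exists_conjTranspose_mul_eq_of_mem_segment h
  suffices lam ∈ rankNumRange (2 * k) (Fintype.card (Unit × Fin k)) (segmentMatrix k a b) by
    simpa using this
  refine mem_rankNumRange_of_conjTranspose_mul_eq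
    ((C ⊗ₖ (1 : Matrix (Fin k) (Fin k) ℂ)).submatrix finProdFinEquiv.symm id) ?_ ?_
  · rw [conjTranspose_submatrix, submatrix_mul_equiv, conjTranspose_kronecker,
      ← mul_kronecker_mul, hC, conjTranspose_one, one_mul, one_kronecker_one, submatrix_id_id]
  · rw [segmentMatrix_eq_submatrix_kronecker, conjTranspose_submatrix, submatrix_mul_equiv,
      submatrix_mul_equiv, conjTranspose_kronecker, ← mul_kronecker_mul, ← mul_kronecker_mul,
      hCDC, conjTranspose_one, one_mul, one_mul, smul_kronecker, one_kronecker_one,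
      submatrix_id_id]

end SegmentMatrix

/-- For a line segment `P = conv{a₁, a₂}`, the smallest size of a normal
matrix whose rank-k numerical range equals `P` is `2k` when `a₁ ≠ a₂`, and `k` when
`a₁ = a₂`. -/
theorem stmt6 (k : ℕ) (hk : 1 ≤ k) (a₁ a₂ : ℂ) :
    (a₁ ≠ a₂ →
      ((∃ A : Matrix (Fin (2 * k)) (Fin (2 * k)) ℂ, A * Aᴴ = Aᴴ * A ∧
          rankNumRange (2 * k) k A = segment ℝ a₁ a₂) ∧
        ∀ n : ℕ, n < 2 * k → ∀ A : Matrix (Fin n) (Fin n) ℂ, A * Aᴴ = Aᴴ * A →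
          rankNumRange n k A ≠ segment ℝ a₁ a₂)) ∧
    (a₁ = a₂ →
      ((∃ A : Matrix (Fin k) (Fin k) ℂ, A * Aᴴ = Aᴴ * A ∧
          rankNumRange k k A = {a₁}) ∧
        ∀ n : ℕ, n < k → ∀ A : Matrix (Fin n) (Fin n) ℂ, A * Aᴴ = Aᴴ * A →
          rankNumRange n k A ≠ {a₁})) := by
  refine ⟨fun hne => ⟨?_, fun n hn A _ heq => ?_⟩, fun _ => ⟨?_, fun n hn A _ heq => ?_⟩⟩
  · exact ⟨segmentMatrix k a₁ a₂, diagonal_mul_conjTranspose_self_comm _,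
      (rankNumRange_segmentMatrix_subset k a₁ a₂ hk).antisymm
        (segment_subset_rankNumRange_segmentMatrix k a₁ a₂)⟩
  · exact segment_infinite hne (heq ▸ rankNumRange_finite hn)
  · refine ⟨a₁ • 1, ?_, rankNumRange_smul_one hk a₁⟩
    rw [smul_one_eq_diagonal]
    exact diagonal_mul_conjTranspose_self_comm _
  · rw [rankNumRange_eq_empty_of_lt hn] at heq
    exact Set.singleton_ne_empty a₁ heq.symm
end
end

section
/- Let k > 1 and let Π be a p-element subset of the unit circle Ω containing exactly s pairs of antipodal points, where p ≥ 3 and s ≥ 0. Suppose Π is 1-regular but not k-regular and k ≥ p − s. Then one can extend Π to a k-regular set by adding finitely many points of Ω \ Π: if s = 0 there is a (2k+1−p)-element set Π' ⊆ Ω \ Π with Π ∪ Π' k-regular, and if s > 0 there is a (2k+2−p)-element set Π' ⊆ Ω \ Π with Π ∪ Π' k-regular. -/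
open scoped Classical
open Matrix

noncomputable section

/-!
A point `z` of the unit circle lies in the open semicircle starting at `β` iff
`0 < Im (z * conj β)`, i.e. `0 < sin (x - b)` for `z = cis x`, `β = cis b`.

If `s > 0`, close `Φ` under negation (`2p - 2s ≤ 2k` points) and add antipodal pairs up to
`2k + 2` points. Any open semicircle contains exactly one point of each antipodal pair except the
pair of its endpoints, hence at least `k` points.

If `s = 0`, `Φ` has no antipodal pairs, so its points are `cis θ` or `-cis θ` for distinct
`θ ∈ [0, π)`. Complete these to `k` angles and perturb the ones of the second kind by `-ε`, to get
a set `Z` of angles in a half-turn, more than `ε` apart. The `2k + 1` points `cis z`,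
`cis (z + ε + π)` (`z ∈ Z`) and `cis ω`, with `ω` beyond `Z`, contain `Φ` and are `k`-regular.
-/

open Real Set ComplexConjugate Pointwise

lemma Set.Infinite.exists_finset_superset_card_eq {α : Type*} {s : Set α} (hs : s.Infinite)
    {t : Finset α} (ht : ↑t ⊆ s) {n : ℕ} (hn : t.card ≤ n) :
    ∃ u : Finset α, t ⊆ u ∧ ↑u ⊆ s ∧ u.card = n := by
  obtain ⟨r, hr, hrcard⟩ := (hs.sdiff t.finite_toSet).exists_subset_card_eq (n - t.card)
  refine ⟨t ∪ r, Finset.subset_union_left, ?_, ?_⟩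
  · rw [Finset.coe_union]
    exact union_subset ht (hr.trans sdiff_subset)
  · rw [Finset.card_union_of_disjoint
      (Finset.disjoint_coe.1 (disjoint_of_subset_right hr disjoint_sdiff_right)), hrcard]
    omega

def cis (x : ℝ) : ℂ := Complex.exp (x * Complex.I)

lemma cis_eq_coe_circleExp (x : ℝ) : cis x = Circle.exp x := (Circle.coe_exp x).symm

lemma norm_cis (x : ℝ) : ‖cis x‖ = 1 := Complex.norm_exp_ofReal_mul_I x

lemma cis_add (x y : ℝ) : cis (x + y) = cis x * cis y := by
  simp only [cis_eq_coe_circleExp, Circle.exp_add, Circle.coe_mul]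

lemma cis_add_pi (x : ℝ) : cis (x + π) = -cis x := by
  rw [cis_add, show cis π = -1 from Complex.exp_pi_mul_I, mul_neg_one]

lemma cis_add_int_mul_two_pi (x : ℝ) (n : ℤ) : cis (x + n * (2 * π)) = cis x := by
  simp only [cis_eq_coe_circleExp, Circle.exp_add, Circle.exp_int_mul_two_pi, mul_one]

lemma injOn_cis_Ico (a : ℝ) : InjOn cis (Ico a (a + 2 * π)) := by
  rw [funext cis_eq_coe_circleExp]
  exact Subtype.val_injective.comp_injOn (Circle.exp_injOn_Ico (by linarith))

lemma exists_mem_Ico_cis_eq (a : ℝ) {z : ℂ} (hz : ‖z‖ = 1) :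
    ∃ x ∈ Ico a (a + 2 * π), cis x = z := by
  refine ⟨toIcoMod two_pi_pos a z.arg, toIcoMod_mem_Ico two_pi_pos a z.arg, ?_⟩
  rw [← cis_add_int_mul_two_pi _ (toIcoDiv two_pi_pos a z.arg), ← zsmul_eq_mul,
    toIcoMod_add_toIcoDiv_zsmul]
  simpa [hz, cis] using Complex.norm_mul_exp_arg_mul_I z

lemma exists_mem_Ico_eq_cis_or_eq_neg_cis {z : ℂ} (hz : ‖z‖ = 1) :
    ∃ θ ∈ Ico 0 π, z = cis θ ∨ z = -cis θ := by
  obtain ⟨x, hx, rfl⟩ := exists_mem_Ico_cis_eq 0 hz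
  by_cases h : x < π
  · exact ⟨x, ⟨hx.1, h⟩, Or.inl rfl⟩
  · refine ⟨x - π, ⟨by linarith, by linarith [hx.2]⟩, Or.inr ?_⟩
    rw [← cis_add_pi, sub_add_cancel]

lemma cis_mul_conj_cis (x y : ℝ) : cis x * conj (cis y) = cis (x - y) := by
  simp only [cis, ← Complex.exp_conj, ← Complex.exp_add, map_mul, Complex.conj_ofReal,
    Complex.conj_I]
  push_cast
  ring_nf

lemma mul_conj_eq_one_of_norm_eq_one {β : ℂ} (hβ : ‖β‖ = 1) : β * conj β = 1 := by
  simp [Complex.mul_conj', hβ]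

lemma mem_openSemicircle_iff {z β : ℂ} (hβ : ‖β‖ = 1) :
    z ∈ openSemicircle β ↔ ‖z‖ = 1 ∧ 0 < (z * conj β).im := by
  have hββ := mul_conj_eq_one_of_norm_eq_one hβ
  constructor
  · rintro ⟨t, ht0, htπ, rfl⟩
    refine ⟨by rw [norm_mul, hβ, Complex.norm_exp_ofReal_mul_I, one_mul], ?_⟩
    rw [mul_assoc, hββ, mul_one, Complex.exp_ofReal_mul_I_im]
    exact sin_pos_of_pos_of_lt_pi ht0 htπ
  · rintro ⟨hz, him⟩
    set w := z * conj β
    have hw : ‖w‖ = 1 := by simp [w, hz, hβ]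
    refine ⟨w.arg, lt_of_le_of_ne (Complex.arg_nonneg_iff.2 him.le) ?_,
      Complex.arg_lt_pi_iff.2 (Or.inr him.ne'), ?_⟩
    · exact fun h => him.ne' (Complex.arg_eq_zero_iff.1 h.symm).2
    · rw [show Complex.exp (w.arg * Complex.I) = w by
        simpa [hw] using Complex.norm_mul_exp_arg_mul_I w, mul_assoc, mul_comm (conj β), hββ,
        mul_one]

lemma cis_mem_openSemicircle_cis_iff {x b : ℝ} :
    cis x ∈ openSemicircle (cis b) ↔ 0 < sin (x - b) := by
  rw [mem_openSemicircle_iff (norm_cis b), cis_mul_conj_cis]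
  simp only [cis, Complex.norm_exp_ofReal_mul_I, Complex.exp_ofReal_mul_I_im, true_and]

lemma eq_or_eq_neg_of_notMem_openSemicircle {z β : ℂ} (hz : ‖z‖ = 1) (hβ : ‖β‖ = 1)
    (h : z ∉ openSemicircle β) (hneg : -z ∉ openSemicircle β) : z = β ∨ z = -β := by
  rw [mem_openSemicircle_iff hβ] at h hneg
  set w := z * conj β
  have him : w.im = 0 := by
    simp only [hz, norm_neg, true_and, not_lt, neg_mul, Complex.neg_im] at h hneg
    linarith
  have hw : w = 1 ∨ w = -1 := by
    have hw : ‖w‖ = 1 := by simp [w, hz, hβ]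
    have hw_re : w = w.re := Complex.ext rfl (by simp [him])
    rw [hw_re, Complex.norm_real, Real.norm_eq_abs] at hw
    rw [hw_re]
    rcases abs_eq zero_le_one |>.1 hw with h1 | h1 <;> simp [h1]
  have hz : z = w * β := by
    rw [mul_assoc, mul_comm (conj β), mul_conj_eq_one_of_norm_eq_one hβ, mul_one]
  rcases hw with h1 | h1 <;> simp [hz, h1]

lemma isKRegular_of_forall_neg_mem {k : ℕ} {S : Finset ℂ} (hS : ∀ z ∈ S, ‖z‖ = 1)
    (hneg : ∀ z ∈ S, -z ∈ S) (hcard : 2 * k + 2 ≤ S.card) : IsKRegular k ↑S := by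
  intro β hβ
  set P := S.filter (· ∈ openSemicircle β)
  have hcover : S ⊆ P ∪ -P ∪ {β, -β} := by
    intro z hz
    by_cases h : z ∈ openSemicircle β
    · simp [P, hz, h]
    by_cases h' : -z ∈ openSemicircle β
    · simp [P, hneg z hz, h']
    · rcases eq_or_eq_neg_of_notMem_openSemicircle (hS z hz) hβ h h' with rfl | rfl <;> simp
  have hP : S.card ≤ 2 * P.card + 2 :=
    calc S.card ≤ (P ∪ -P ∪ {β, -β}).card := Finset.card_le_card hcover
      _ ≤ P.card + P.card + 2 := by
        grw [Finset.card_union_le, Finset.card_union_le, Finset.card_neg, Finset.card_le_two]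
      _ = 2 * P.card + 2 := by ring
  rw [show ↑S ∩ openSemicircle β = ↑P by ext; simp [P], Set.ncard_coe_finset]
  omega

lemma exists_cis_notMem (S : Finset ℂ) : ∃ x, cis x ∉ S := by
  obtain ⟨_, ⟨x, -, rfl⟩, hx⟩ :=
    ((Ico_infinite (by linarith [two_pi_pos] : (0 : ℝ) < 0 + 2 * π)).image
      (injOn_cis_Ico 0)).exists_notMem_finset S
  exact ⟨x, hx⟩

lemma exists_neg_closed_superset_card_eq {T : Finset ℂ} (hT : ∀ z ∈ T, ‖z‖ = 1)
    (hneg : ∀ z ∈ T, -z ∈ T) (m : ℕ) :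
    ∃ S : Finset ℂ, T ⊆ S ∧ (∀ z ∈ S, ‖z‖ = 1) ∧ (∀ z ∈ S, -z ∈ S) ∧
      S.card = T.card + 2 * m := by
  induction m with
  | zero => exact ⟨T, subset_rfl, hT, hneg, rfl⟩
  | succ m ih =>
    obtain ⟨S, hTS, hS, hSneg, hcard⟩ := ih
    obtain ⟨x, hx⟩ := exists_cis_notMem S
    have hx' : -cis x ∉ S := fun h => hx (by simpa using hSneg _ h)
    have hne : cis x ≠ -cis x := fun h => Complex.exp_ne_zero _ (CharZero.eq_neg_self_iff.1 h)
    refine ⟨insert (cis x) (insert (-cis x) S),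
      hTS.trans ((Finset.subset_insert _ _).trans (Finset.subset_insert _ _)), ?_, ?_, ?_⟩
    · simp only [Finset.mem_insert, forall_eq_or_imp, norm_neg, norm_cis, true_and]
      exact hS
    · simp only [Finset.mem_insert, forall_eq_or_imp, neg_neg]
      exact ⟨by simp, by simp, fun z hz => by simp [hSneg z hz]⟩
    · rw [Finset.card_insert_of_notMem (by simp [hne, hx]), Finset.card_insert_of_notMem hx',
        hcard]
      ring

lemma exists_isKRegular_superset_card_eq_two_mul_add_two {k s : ℕ} (Φ : Finset ℂ)
    (hΦ : ∀ z ∈ Φ, ‖z‖ = 1) (hs : (Φ.filter (fun α => -α ∈ Φ)).card = 2 * s)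
    (hks : Φ.card ≤ k + s) :
    ∃ S : Finset ℂ, Φ ⊆ S ∧ (∀ z ∈ S, ‖z‖ = 1) ∧ S.card = 2 * k + 2 ∧ IsKRegular k ↑S := by
  have hT : ∀ z ∈ Φ ∪ -Φ, ‖z‖ = 1 := by
    intro z hz
    rcases Finset.mem_union.1 hz with h | h
    · exact hΦ z h
    · simpa using hΦ (-z) (by simpa using h)
  have hTneg : ∀ z ∈ Φ ∪ -Φ, -z ∈ Φ ∪ -Φ := by
    intro z hz
    simp only [Finset.mem_union, Finset.mem_neg', neg_neg] at hz ⊢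
    tauto
  have hTcard : (Φ ∪ -Φ).card + 2 * s = 2 * Φ.card := by
    rw [← hs, show Φ.filter (fun α => -α ∈ Φ) = Φ ∩ -Φ by ext; simp [Finset.mem_neg'],
      Finset.card_union_add_card_inter, Finset.card_neg, two_mul]
  obtain ⟨S, hΦS, hS, hSneg, hScard⟩ :=
    exists_neg_closed_superset_card_eq hT hTneg (k + 1 + s - Φ.card)
  have hScard' : S.card = 2 * k + 2 := by omega
  exact ⟨S, Finset.subset_union_left.trans hΦS, hS, hScard',
    isKRegular_of_forall_neg_mem hS hSneg hScard'.ge⟩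

lemma isKRegular_image_cis {k : ℕ} {A : Finset ℝ} {γ : ℝ} (hA : ↑A ⊆ Ico γ (γ + 2 * π))
    (h : ∀ c ∈ Ico γ (γ + 2 * π), k ≤ (A.filter (fun a => 0 < sin (a - c))).card) :
    IsKRegular k ↑(A.image cis) := by
  intro β hβ
  obtain ⟨c, hc, rfl⟩ := exists_mem_Ico_cis_eq γ hβ
  set P := A.filter (fun a => 0 < sin (a - c))
  have hsub : (↑(P.image cis) : Set ℂ) ⊆ ↑(A.image cis) ∩ openSemicircle (cis c) := by
    simp only [Finset.coe_image, Finset.coe_filter, P]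
    rintro _ ⟨a, ha, rfl⟩
    exact ⟨⟨a, ha.1, rfl⟩, cis_mem_openSemicircle_cis_iff.2 ha.2⟩
  calc k ≤ P.card := h c hc
    _ = (P.image cis).card :=
        (Finset.card_image_of_injOn ((injOn_cis_Ico γ).mono
          ((Finset.coe_subset.2 (Finset.filter_subset _ _)).trans hA))).symm
    _ ≤ _ := by
        rw [← Set.ncard_coe_finset]
        exact Set.ncard_le_ncard hsub ((A.image cis).finite_toSet.inter_of_left _)

structure IsSeparatedConfig (γ ε ω : ℝ) (Z : Finset ℝ) : Prop where
  pos : 0 < ε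
  lt_of_mem : ∀ z ∈ Z, γ < z
  add_lt_of_mem : ∀ z ∈ Z, z + ε < ω
  γ_lt_ω : γ < ω
  ω_lt : ω < γ + π
  add_lt_of_lt : ∀ z ∈ Z, ∀ z' ∈ Z, z < z' → z + ε < z'

def nearAntipodalAngles (Z : Finset ℝ) (ε ω : ℝ) : Finset ℝ :=
  insert ω (Z ∪ Z.image (· + (ε + π)))

namespace IsSeparatedConfig

variable {γ ε ω : ℝ} {Z : Finset ℝ}

lemma nearAntipodalAngles_subset (h : IsSeparatedConfig γ ε ω Z) :
    ↑(nearAntipodalAngles Z ε ω) ⊆ Ico γ (γ + 2 * π) := by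
  have := h.pos
  have := pi_pos
  intro a ha
  simp only [nearAntipodalAngles, Finset.coe_insert, Finset.coe_union, Finset.coe_image,
    mem_insert_iff, mem_union, Finset.mem_coe, mem_image] at ha
  rcases ha with rfl | hz | ⟨z, hz, rfl⟩
  · exact ⟨h.γ_lt_ω.le, by linarith [h.ω_lt]⟩
  · exact ⟨(h.lt_of_mem a hz).le, by linarith [h.add_lt_of_mem a hz, h.ω_lt]⟩
  · exact ⟨by linarith [h.lt_of_mem z hz], by linarith [h.add_lt_of_mem z hz, h.ω_lt]⟩

lemma card_nearAntipodalAngles (h : IsSeparatedConfig γ ε ω Z) :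
    (nearAntipodalAngles Z ε ω).card = 2 * Z.card + 1 := by
  have := h.pos
  have hdisj : Disjoint Z (Z.image (· + (ε + π))) := by
    simp only [Finset.disjoint_left, Finset.mem_image, not_exists, not_and]
    intro z hz z' hz' hzz'
    linarith [h.add_lt_of_mem z hz, h.lt_of_mem z' hz', h.ω_lt]
  have hω : ω ∉ Z ∪ Z.image (· + (ε + π)) := by
    simp only [Finset.mem_union, Finset.mem_image, not_or, not_exists, not_and]
    refine ⟨fun hω => ?_, fun z hz hzω => ?_⟩
    · linarith [h.add_lt_of_mem ω hω]
    · linarith [h.lt_of_mem z hz, h.ω_lt]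
  rw [nearAntipodalAngles, Finset.card_insert_of_notMem hω, Finset.card_union_of_disjoint hdisj,
    Finset.card_image_of_injective _ (add_left_injective _)]
  ring

/-- For `c` in `[z, z + ε]` neither `z` nor `z + ε + π` lies in the half-turn `(c, c + π)`
modulo `2π`; this happens for at most one `z`, and then `ω` does. -/
lemma card_le_card_filter_sin_pos (h : IsSeparatedConfig γ ε ω Z) {c : ℝ}
    (hc : c ∈ Ico γ (γ + 2 * π)) :
    Z.card ≤ ((nearAntipodalAngles Z ε ω).filter (fun a => 0 < sin (a - c))).card := by
  have := h.pos
  have := h.ω_lt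
  let pick : ℝ → ℝ := fun z =>
    if z ≤ c ∧ c ≤ z + ε then ω else if z + ε < c ∧ c < z + ε + π then z + ε + π else z
  refine Finset.card_le_card_of_injOn pick ?_ ?_
  · intro z hz
    have h1 := h.lt_of_mem z hz
    have h2 := h.add_lt_of_mem z hz
    simp only [Finset.coe_filter, nearAntipodalAngles, Finset.mem_insert, Finset.mem_union,
      Finset.mem_image, pick]
    split_ifs with hbad hmid
    · exact ⟨Or.inl rfl, sin_pos_of_pos_of_lt_pi (by linarith) (by linarith)⟩
    · exact ⟨Or.inr (Or.inr ⟨z, hz, by ring⟩),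
        sin_pos_of_pos_of_lt_pi (by linarith) (by linarith)⟩
    · refine ⟨Or.inr (Or.inl hz), ?_⟩
      rcases lt_or_ge c z with hcz | hcz
      · exact sin_pos_of_pos_of_lt_pi (by linarith) (by linarith [hc.1])
      · rw [← sin_add_two_pi]
        exact sin_pos_of_pos_of_lt_pi (by linarith [hc.2]) (by grind)
  · intro z hz z' hz' hzz'
    have := h.lt_of_mem z hz
    have := h.lt_of_mem z' hz'
    have := h.add_lt_of_mem z hz
    have := h.add_lt_of_mem z' hz'
    rcases lt_trichotomy z z' with hlt | rfl | hlt
    · have := h.add_lt_of_lt z hz z' hz' hlt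
      simp only [pick] at hzz'
      split_ifs at hzz' <;> linarith
    · rfl
    · have := h.add_lt_of_lt z' hz' z hz hlt
      simp only [pick] at hzz'
      split_ifs at hzz' <;> linarith

lemma isKRegular_image_cis_nearAntipodalAngles (h : IsSeparatedConfig γ ε ω Z) :
    IsKRegular Z.card ↑((nearAntipodalAngles Z ε ω).image cis) :=
  isKRegular_image_cis h.nearAntipodalAngles_subset fun _ hc => h.card_le_card_filter_sin_pos hc

end IsSeparatedConfig

open Filter Topology in
lemma exists_pos_forall_add_lt (N : Finset ℝ) (hN : ∀ θ ∈ N, θ < π) :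
    ∃ ε > 0, 5 * ε < π ∧ (∀ θ ∈ N, θ + 4 * ε < π) ∧
      ∀ θ ∈ N, ∀ θ' ∈ N, θ < θ' → θ + 2 * ε < θ' := by
  have hlim : ∀ (θ a : ℝ), Tendsto (fun ε : ℝ => θ + a * ε) (𝓝 0) (𝓝 θ) := fun θ a =>
    (show Continuous fun ε : ℝ => θ + a * ε by fun_prop).tendsto' 0 θ (by simp)
  have hsmall : ∀ᶠ ε in 𝓝 (0 : ℝ), 5 * ε < π ∧
      (∀ θ ∈ N, θ + 4 * ε < π) ∧ ∀ θ ∈ N, ∀ θ' ∈ N, θ < θ' → θ + 2 * ε < θ' := by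
    refine ((hlim 0 5).eventually_lt_const pi_pos |>.mono fun _ h => by linarith).and <|
      (N.eventually_all.2 fun θ hθ => (hlim θ 4).eventually_lt_const (hN θ hθ)).and
      (N.eventually_all.2 fun θ _ => N.eventually_all.2 fun θ' _ => ?_)
    by_cases hlt : θ < θ'
    · exact ((hlim θ 2).eventually_lt_const hlt).mono fun _ h _ => h
    · exact Eventually.of_forall fun _ h => absurd h hlt
  obtain ⟨ε, hε, hεpos⟩ :=
    ((hsmall.filter_mono nhdsWithin_le_nhds).and (self_mem_nhdsWithin (s := Ioi 0))).exists
  exact ⟨ε, hεpos, hε⟩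

lemma exists_isSeparatedConfig (N : Finset ℝ) (hN : ↑N ⊆ Ico 0 π) (L : Set ℝ) :
    ∃ γ ε ω : ℝ, ∃ Z : Finset ℝ, IsSeparatedConfig γ ε ω Z ∧ Z.card = N.card ∧
      ∀ θ ∈ N, (θ ∈ L → θ - ε ∈ Z) ∧ (θ ∉ L → θ ∈ Z) := by
  obtain ⟨ε, hε, hεπ, hNπ, hNsep⟩ := exists_pos_forall_add_lt N fun θ hθ => (hN hθ).2
  let ζ : ℝ → ℝ := fun θ => if θ ∈ L then θ - ε else θ
  have hζ : ∀ θ, θ - ε ≤ ζ θ ∧ ζ θ ≤ θ := fun θ => by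
    simp only [ζ]; split_ifs <;> constructor <;> linarith
  have hζsep : ∀ θ ∈ N, ∀ θ' ∈ N, θ < θ' → ζ θ + ε < ζ θ' := fun θ hθ θ' hθ' hlt => by
    linarith [hζ θ, hζ θ', hNsep θ hθ θ' hθ' hlt]
  have hζinj : InjOn ζ ↑N := by
    intro θ hθ θ' hθ' h
    rcases lt_trichotomy θ θ' with hlt | rfl | hlt
    · linarith [hζsep θ hθ θ' hθ' hlt]
    · rfl
    · linarith [hζsep θ' hθ' θ hθ hlt]
  refine ⟨-2 * ε, ε, π - 3 * ε, N.image ζ, ⟨hε, ?_, ?_, by linarith, by linarith, ?_⟩,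
    Finset.card_image_of_injOn hζinj, fun θ hθ => ⟨fun hL => ?_, fun hL => ?_⟩⟩
  · simp only [Finset.forall_mem_image]
    exact fun θ hθ => by linarith [hζ θ, (hN hθ).1]
  · simp only [Finset.forall_mem_image]
    exact fun θ hθ => by linarith [hζ θ, hNπ θ hθ]
  · simp only [Finset.forall_mem_image]
    intro θ hθ θ' hθ' hlt
    rcases lt_trichotomy θ θ' with h | rfl | h
    · exact hζsep θ hθ θ' hθ' h
    · exact absurd hlt (lt_irrefl _)
    · linarith [hζsep θ' hθ' θ hθ h]
  · exact Finset.mem_image.2 ⟨θ, hθ, if_pos hL⟩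
  · exact Finset.mem_image.2 ⟨θ, hθ, if_neg hL⟩

lemma exists_isKRegular_superset_card_eq_two_mul_add_one {k : ℕ} (Φ : Finset ℂ)
    (hΦ : ∀ z ∈ Φ, ‖z‖ = 1) (hk : Φ.card ≤ k) (hanti : ∀ α ∈ Φ, -α ∉ Φ) :
    ∃ S : Finset ℂ, Φ ⊆ S ∧ (∀ z ∈ S, ‖z‖ = 1) ∧ S.card = 2 * k + 1 ∧ IsKRegular k ↑S := by
  choose! θ hθ hθΦ using fun α hα => exists_mem_Ico_eq_cis_or_eq_neg_cis (hΦ α hα)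
  obtain ⟨N, hΦN, hN, hNcard⟩ := (Ico_infinite pi_pos).exists_finset_superset_card_eq
    (t := Φ.image θ) (by rw [Finset.coe_image]; exact image_subset_iff.2 hθ)
    (Finset.card_image_le.trans hk)
  obtain ⟨γ, ε, ω, Z, hZ, hZcard, hZN⟩ := exists_isSeparatedConfig _ hN {t | -cis t ∈ Φ}
  refine ⟨(nearAntipodalAngles Z ε ω).image cis, ?_, ?_, ?_, ?_⟩
  · intro α hα
    have hθN : θ α ∈ N := hΦN (Finset.mem_image_of_mem θ hα)
    rcases hθΦ α hα with h | h
    · have : θ α ∈ Z := (hZN _ hθN).2 (by simpa [← h] using hanti α hα)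
      exact Finset.mem_image.2
        ⟨θ α, Finset.mem_insert_of_mem (Finset.mem_union_left _ this), h.symm⟩
    · have : θ α - ε ∈ Z := (hZN _ hθN).1 (by simpa [← h] using hα)
      refine Finset.mem_image.2 ⟨θ α - ε + (ε + π), Finset.mem_insert_of_mem
        (Finset.mem_union_right _ (Finset.mem_image_of_mem _ this)), ?_⟩
      rw [show θ α - ε + (ε + π) = θ α + π by ring, cis_add_pi, ← h]
  · simp [norm_cis]
  · rw [Finset.card_image_of_injOn ((injOn_cis_Ico γ).mono hZ.nearAntipodalAngles_subset),
      hZ.card_nearAntipodalAngles, hZcard, hNcard]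
  · simpa [hZcard, hNcard] using hZ.isKRegular_image_cis_nearAntipodalAngles

lemma exists_disjoint_extension {k n : ℕ} {Φ : Finset ℂ}
    (h : ∃ S : Finset ℂ, Φ ⊆ S ∧ (∀ z ∈ S, ‖z‖ = 1) ∧ S.card = n ∧ IsKRegular k ↑S) :
    ∃ Φ' : Finset ℂ, (∀ z ∈ Φ', ‖z‖ = 1) ∧ Disjoint Φ' Φ ∧ Φ'.card + Φ.card = n ∧
      IsKRegular k ↑(Φ ∪ Φ') := by
  obtain ⟨S, hΦS, hS, rfl, hreg⟩ := h
  refine ⟨S \ Φ, fun z hz => hS z (Finset.mem_sdiff.1 hz).1, Finset.sdiff_disjoint,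
    Finset.card_sdiff_add_card_eq_card hΦS, ?_⟩
  rwa [Finset.union_sdiff_of_subset hΦS]

theorem stmt14_general {k p s : ℕ}
    (Φ : Finset ℂ) (hΦ : ∀ z ∈ Φ, ‖z‖ = 1) (hcard : Φ.card = p)
    (hs : (Φ.filter (fun α => -α ∈ Φ)).card = 2 * s)
    (hks : p ≤ k + s) :
    (s = 0 → ∃ Φ' : Finset ℂ, (∀ z ∈ Φ', ‖z‖ = 1) ∧ Disjoint Φ' Φ ∧
      Φ'.card + p = 2 * k + 1 ∧ IsKRegular k ↑(Φ ∪ Φ')) ∧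
    (0 < s → ∃ Φ' : Finset ℂ, (∀ z ∈ Φ', ‖z‖ = 1) ∧ Disjoint Φ' Φ ∧
      Φ'.card + p = 2 * k + 2 ∧ IsKRegular k ↑(Φ ∪ Φ')) := by
  subst hcard
  refine ⟨fun hs0 => exists_disjoint_extension ?_, fun _ => exists_disjoint_extension
    (exists_isKRegular_superset_card_eq_two_mul_add_two Φ hΦ hs hks)⟩
  have hanti : ∀ α ∈ Φ, -α ∉ Φ := by
    simpa [hs0, Finset.filter_eq_empty_iff] using hs
  exact exists_isKRegular_superset_card_eq_two_mul_add_one Φ hΦ (by omega) hanti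

/-- A 1-regular but not k-regular p-element subset of the unit circle
with exactly s antipodal pairs and `k ≥ p - s` can be extended to a k-regular set by
adding `2k+1-p` points when `s = 0`, and `2k+2-p` points when `s > 0`. -/
theorem stmt14 {k p s : ℕ} (hk : 1 < k) (hp : 3 ≤ p)
    (Φ : Finset ℂ) (hΦ : ∀ z ∈ Φ, ‖z‖ = 1) (hcard : Φ.card = p)
    (hs : (Φ.filter (fun α => -α ∈ Φ)).card = 2 * s)
    (h1reg : IsKRegular 1 ↑Φ) (hnkreg : ¬ IsKRegular k ↑Φ)
    (hks : p ≤ k + s) :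
    (s = 0 → ∃ Φ' : Finset ℂ, (∀ z ∈ Φ', ‖z‖ = 1) ∧ Disjoint Φ' Φ ∧
      Φ'.card + p = 2 * k + 1 ∧ IsKRegular k ↑(Φ ∪ Φ')) ∧
    (0 < s → ∃ Φ' : Finset ℂ, (∀ z ∈ Φ', ‖z‖ = 1) ∧ Disjoint Φ' Φ ∧
      Φ'.card + p = 2 * k + 2 ∧ IsKRegular k ↑(Φ ∪ Φ')) :=
  stmt14_general Φ hΦ hcard hs hks
end
end
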